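/- The cartesian monoidal structure on polynomial functors is closed, with exponential given by the formula Q^A = ∏_{i ∈ I} (Q ∘ (aᵢ + –)): for any polynomial functor A = ∐_{i ∈ I} Fin(aᵢ, –) and any functors P, Q : FintypeCat ⥤ FintypeCat with Q polynomial, there is a bijection, natural in P, between natural transformations P × A ⟶ Q and natural transformations P ⟶ ∏_{i ∈ I} (Q ∘ (aᵢ + –)), where (aᵢ + –) : FintypeCat ⥤ FintypeCat sends X to the disjoint union aᵢ + X. -/

import Mathlib

/- STATEMENT 18: The cartesian monoidal structure on polynomial functors is closed, with
exponential `Q^A = ∏_{i ∈ I} (Q ∘ (aᵢ + –))`: for any polynomial functor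
`A = ∐_{i ∈ I} Fin(aᵢ, –)` and any functors `P, Q : FintypeCat ⥤ FintypeCat` with `Q`
polynomial, there is a bijection, natural in `P`, between natural transformations
`P × A ⟶ Q` and natural transformations `P ⟶ ∏_{i ∈ I} (Q ∘ (aᵢ + –))`. -/

open CategoryTheory CategoryTheory.Limits Opposite

noncomputable section

noncomputable instance (X Y : FintypeCat.{0}) : Fintype (X ⟶ Y) := by
  exact Fintype.ofFinite (X ⟶ Y)

/-- The finite coproduct `∐ᵢ Fin(kᵢ, –)` of corepresentable functors `FintypeCat ⥤ FintypeCat`. -/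
def polySum {I : Type} [Fintype I] (k : I → FintypeCat.{0}) :
    FintypeCat.{0} ⥤ FintypeCat.{0} where
  obj X := FintypeCat.of (Σ i, (k i ⟶ X))
  map f := FintypeCat.homMk fun x => ⟨x.1, x.2 ≫ f⟩

/-- A polynomial functor is a finite coproduct of corepresentables. -/
def IsPolynomial (P : FintypeCat.{0} ⥤ FintypeCat.{0}) : Prop :=
  ∃ (I : Type) (_ : Fintype I) (k : I → FintypeCat.{0}), Nonempty (P ≅ polySum k)

/-- The functor `a + – : FintypeCat ⥤ FintypeCat`, `X ↦ a ⊕ X`. -/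
def plusF (a : FintypeCat.{0}) : FintypeCat.{0} ⥤ FintypeCat.{0} where
  obj X := FintypeCat.of (a ⊕ X)
  map f := FintypeCat.homMk (Sum.map id f)
  map_id := by intro X; ext x; cases x <;> rfl
  map_comp := by intro X Y Z f g; ext x; cases x <;> rfl

/-!
Write `A = ∐ᵢ Fin(aᵢ, –)`. An element of `(P × A)(X)` is a triple `(p, i, h)` with `p ∈ P(X)` and
`h : aᵢ → X`, and every such triple is the image of the generic one `(P(inr) p, i, inl)` in
`(P × A)(aᵢ + X)` under the map `[h, id] : aᵢ + X → X`. So a natural `f : P × A ⟶ Q` is determined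
by the maps `p ↦ f(P(inr) p, i, inl) : P(X) → Q(aᵢ + X)`, one natural transformation
`P ⟶ Q ∘ (aᵢ + –)` for each `i`, and conversely such a family `g` gives back
`(p, i, h) ↦ Q([h, id]) (gᵢ p)`. This is Yoneda's argument for the corepresentable `Fin(aᵢ, –)`.
-/

universe u

namespace CategoryTheory.Limits

@[simps]
def Pi.liftEquiv {C : Type*} [Category C] {β : Type*} (F : β → C) [HasProduct F] (X : C) :
    (∀ b, X ⟶ F b) ≃ (X ⟶ ∏ᶜ F) where
  toFun := Pi.lift
  invFun g b := g ≫ Pi.π F b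
  left_inv _ := by simp
  right_inv _ := by ext; simp

end CategoryTheory.Limits

namespace PolynomialFunctor

section PointwiseProd

variable {C : Type*} [Category C]

lemma map_map_apply (F : C ⥤ FintypeCat.{u}) {X Y Z : C} (f : X ⟶ Y) (g : Y ⟶ Z)
    (x : F.obj X) : F.map g (F.map f x) = F.map (f ≫ g) x := by
  simp

variable (P A : C ⥤ FintypeCat.{u})

def pointwiseProd : C ⥤ FintypeCat.{u} where
  obj X := FintypeCat.of (P.obj X × A.obj X)
  map f := FintypeCat.homMk fun z => (P.map f z.1, A.map f z.2)

@[simp]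
lemma pointwiseProd_map_apply {X Y : C} (f : X ⟶ Y) (x : (P.obj X).obj) (y : (A.obj X).obj) :
    (pointwiseProd P A).map f (x, y) = (P.map f x, A.map f y) :=
  rfl

def pointwiseFan : BinaryFan P A :=
  BinaryFan.mk (P := pointwiseProd P A)
    { app _ := FintypeCat.homMk Prod.fst } { app _ := FintypeCat.homMk Prod.snd }

def pointwiseFanIsLimit : IsLimit (pointwiseFan P A) :=
  BinaryFan.isLimitMk
    (fun s =>
      { app X := FintypeCat.homMk fun x => (s.fst.app X x, s.snd.app X x)
        naturality _ _ f := by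
          ext x
          exact Prod.ext (s.fst.naturality_apply f x) (s.snd.naturality_apply f x) })
    (fun _ => rfl) (fun _ => rfl)
    (fun s m h₁ h₂ => by
      ext X x
      exact Prod.ext (ConcreteCategory.congr_hom (NatTrans.congr_app h₁ X) x)
        (ConcreteCategory.congr_hom (NatTrans.congr_app h₂ X) x))

def prodIsoPointwiseProd : P ⨯ A ≅ pointwiseProd P A :=
  limit.isoLimitCone ⟨_, pointwiseFanIsLimit P A⟩

lemma prodIsoPointwiseProd_inv_fst :
    (prodIsoPointwiseProd P A).inv ≫ prod.fst = (pointwiseFan P A).fst :=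
  limit.isoLimitCone_inv_π (⟨_, pointwiseFanIsLimit P A⟩ : LimitCone (pair P A)) ⟨.left⟩

lemma prodIsoPointwiseProd_inv_snd :
    (prodIsoPointwiseProd P A).inv ≫ prod.snd = (pointwiseFan P A).snd :=
  limit.isoLimitCone_inv_π (⟨_, pointwiseFanIsLimit P A⟩ : LimitCone (pair P A)) ⟨.right⟩

variable {P} {P' : C ⥤ FintypeCat.{u}}

def pointwiseProdMapLeft (σ : P' ⟶ P) : pointwiseProd P' A ⟶ pointwiseProd P A where
  app X := FintypeCat.homMk fun z => (σ.app X z.1, z.2)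
  naturality _ _ f := by
    ext z
    exact Prod.ext (σ.naturality_apply f z.1) rfl

lemma prodIsoPointwiseProd_inv_naturality (σ : P' ⟶ P) :
    (prodIsoPointwiseProd P' A).inv ≫ prod.map σ (𝟙 A) =
      pointwiseProdMapLeft A σ ≫ (prodIsoPointwiseProd P A).inv := by
  ext : 1
  · rw [Category.assoc, prod.map_fst, ← Category.assoc, prodIsoPointwiseProd_inv_fst,
      Category.assoc, prodIsoPointwiseProd_inv_fst]
    rfl
  · rw [Category.assoc, prod.map_snd, Category.comp_id, prodIsoPointwiseProd_inv_snd,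
      Category.assoc, prodIsoPointwiseProd_inv_snd]
    rfl

end PointwiseProd

section Plus

variable (b : FintypeCat.{0}) {X Y : FintypeCat.{0}}

def plusInl (X : FintypeCat.{0}) : b ⟶ (plusF b).obj X := FintypeCat.homMk Sum.inl

def plusInr (X : FintypeCat.{0}) : X ⟶ (plusF b).obj X := FintypeCat.homMk Sum.inr

variable {b}

def plusDesc (h : b ⟶ X) : (plusF b).obj X ⟶ X := FintypeCat.homMk (Sum.elim h id)

@[simp]
lemma plusInl_comp_map (g : X ⟶ Y) : plusInl b X ≫ (plusF b).map g = plusInl b Y := rfl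

@[simp]
lemma plusInr_comp_map (g : X ⟶ Y) : plusInr b X ≫ (plusF b).map g = g ≫ plusInr b Y := rfl

@[simp]
lemma plusInl_comp_plusDesc (h : b ⟶ X) : plusInl b X ≫ plusDesc h = h := rfl

@[simp]
lemma plusInr_comp_plusDesc (h : b ⟶ X) : plusInr b X ≫ plusDesc h = 𝟙 X := rfl

@[simp]
lemma map_comp_plusDesc (h : b ⟶ X) (g : X ⟶ Y) :
    (plusF b).map g ≫ plusDesc (h ≫ g) = plusDesc h ≫ g := by
  ext (_ | _) <;> rfl

@[simp]
lemma map_plusInr_comp_plusDesc_plusInl :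
    (plusF b).map (plusInr b X) ≫ plusDesc (plusInl b X) = 𝟙 ((plusF b).obj X) := by
  ext (_ | _) <;> rfl

end Plus

section Currying

variable {I : Type} [Fintype I]

/- Unlike the anonymous constructor `⟨i, h⟩`, this has type `(polySum k).obj X` syntactically,
which `rw` and `simp` need in order to match naturality squares of maps out of `polySum k`. -/
def polySumMk {k : I → FintypeCat.{0}} {X : FintypeCat.{0}} (i : I) (h : k i ⟶ X) :
    (polySum k).obj X :=
  ⟨i, h⟩

@[simp]
lemma polySum_map_polySumMk {k : I → FintypeCat.{0}} {X Y : FintypeCat.{0}} (i : I)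
    (h : k i ⟶ X) (f : X ⟶ Y) : (polySum k).map f (polySumMk i h) = polySumMk i (h ≫ f) :=
  rfl

variable (a : I → FintypeCat.{0}) {P Q : FintypeCat.{0} ⥤ FintypeCat.{0}}

def curry (f : pointwiseProd P (polySum a) ⟶ Q) (i : I) : P ⟶ plusF (a i) ⋙ Q where
  app X := FintypeCat.homMk fun p =>
    f.app _ (P.map (plusInr (a i) X) p, polySumMk i (plusInl (a i) X))
  naturality X Y g := by
    ext p
    change f.app _ (P.map (plusInr (a i) Y) (P.map g p), polySumMk i (plusInl (a i) Y)) =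
      Q.map ((plusF (a i)).map g)
        (f.app _ (P.map (plusInr (a i) X) p, polySumMk i (plusInl (a i) X)))
    refine .trans ?_ (f.naturality_apply ((plusF (a i)).map g) _)
    simp [map_map_apply, -Functor.map_comp, -NatTrans.naturality_apply]

def uncurry (g : ∀ i, P ⟶ plusF (a i) ⋙ Q) : pointwiseProd P (polySum a) ⟶ Q where
  app X := FintypeCat.homMk fun z => Q.map (plusDesc z.2.2) ((g z.2.1).app X z.1)
  naturality X Y f := by
    ext ⟨p, i, h⟩
    change Q.map (plusDesc (h ≫ f)) ((g i).app Y (P.map f p)) =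
      Q.map f (Q.map (plusDesc h) ((g i).app X p))
    simp [map_map_apply, -Functor.map_comp]

lemma uncurry_curry (f : pointwiseProd P (polySum a) ⟶ Q) : uncurry a (curry a f) = f := by
  ext X ⟨p, i, h⟩
  change Q.map (plusDesc h) (f.app _ (P.map (plusInr (a i) X) p, polySumMk i (plusInl (a i) X))) =
    f.app X (p, polySumMk i h)
  refine (f.naturality_apply _ _).symm.trans ?_
  simp [map_map_apply, -Functor.map_comp, -NatTrans.naturality_apply]

lemma curry_uncurry (g : ∀ i, P ⟶ plusF (a i) ⋙ Q) : curry a (uncurry a g) = g := by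
  funext i
  ext X p
  change Q.map (plusDesc (plusInl (a i) X)) ((g i).app _ (P.map (plusInr (a i) X) p)) =
    (g i).app X p
  simp [map_map_apply, -Functor.map_comp]

lemma curry_pointwiseProdMapLeft_comp {P' : FintypeCat.{0} ⥤ FintypeCat.{0}} (σ : P' ⟶ P)
    (f : pointwiseProd P (polySum a) ⟶ Q) (i : I) :
    curry a (pointwiseProdMapLeft _ σ ≫ f) i = σ ≫ curry a f i := by
  ext X p
  change f.app _ (σ.app _ (P'.map (plusInr (a i) X) p), polySumMk i (plusInl (a i) X)) =
    f.app _ (P.map (plusInr (a i) X) (σ.app X p), polySumMk i (plusInl (a i) X))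
  rw [NatTrans.naturality_apply]

def curryEquiv : (pointwiseProd P (polySum a) ⟶ Q) ≃ ∀ i, (P ⟶ plusF (a i) ⋙ Q) where
  toFun := curry a
  invFun := uncurry a
  left_inv := uncurry_curry a
  right_inv := curry_uncurry a

end Currying

end PolynomialFunctor

open PolynomialFunctor in
theorem poly_cartesian_closed_general
    {I : Type} [Fintype I] (a : I → FintypeCat.{0})
    (Q : FintypeCat.{0} ⥤ FintypeCat.{0}) :
    ∃ e : ∀ P : FintypeCat.{0} ⥤ FintypeCat.{0},
        (P ⨯ polySum a ⟶ Q) ≃ (P ⟶ ∏ᶜ fun i => plusF (a i) ⋙ Q),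
      -- naturality in `P`
      ∀ (P P' : FintypeCat.{0} ⥤ FintypeCat.{0}) (σ : P' ⟶ P) (f : P ⨯ polySum a ⟶ Q),
        e P' (prod.map σ (𝟙 (polySum a)) ≫ f) = σ ≫ e P f := by
  refine ⟨fun P => ((prodIsoPointwiseProd P (polySum a)).homFromEquiv.trans
    (curryEquiv a)).trans (Pi.liftEquiv _ P), fun P P' σ f => Pi.hom_ext _ _ fun i => ?_⟩
  simp only [Equiv.trans_apply, Iso.homFromEquiv_apply, Pi.liftEquiv_apply]
  rw [← Category.assoc, prodIsoPointwiseProd_inv_naturality, Category.assoc, Pi.lift_π,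
    Category.assoc, Pi.lift_π]
  exact curry_pointwiseProdMapLeft_comp a σ _ i

theorem poly_cartesian_closed
    {I : Type} [Fintype I] (a : I → FintypeCat.{0})
    (Q : FintypeCat.{0} ⥤ FintypeCat.{0}) (hQ : IsPolynomial Q) :
    ∃ e : ∀ P : FintypeCat.{0} ⥤ FintypeCat.{0},
        (P ⨯ polySum a ⟶ Q) ≃ (P ⟶ ∏ᶜ fun i => plusF (a i) ⋙ Q),
      -- naturality in `P`
      ∀ (P P' : FintypeCat.{0} ⥤ FintypeCat.{0}) (σ : P' ⟶ P) (f : P ⨯ polySum a ⟶ Q),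
        e P' (prod.map σ (𝟙 (polySum a)) ≫ f) = σ ≫ e P f :=
  poly_cartesian_closed_general a Q
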